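/- Let A = ⊕_{n∈ℤ} A_n be a strongly ℤ-graded ring with graded local units, let B = ⊕_{n∈ℤ} B_n be a ℤ-graded ring, and let φ : A → B be a graded ring homomorphism. If the restriction of φ to A_0 is injective, then φ is injective. -/

import Mathlib

/-- The additive subgroup generated by products `x * y` with `x ∈ X`, `y ∈ Y`. -/
def subMul {A : Type*} [NonUnitalRing A] (X Y : AddSubgroup A) : AddSubgroup A :=
  AddSubgroup.closure {a | ∃ x ∈ X, ∃ y ∈ Y, a = x * y}

/-!
If `φ x = 0` with `x ∈ A_n`, then for every `v ∈ A_{-n}` the product `v x` lies in `A_0` and is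
killed by `φ`, so `v x = 0`. Strong grading writes every `c ∈ A_m` as a sum of products `u v`
with `u ∈ A_{m+n}`, `v ∈ A_{-n}`, hence `A x = 0`. A homogeneous local unit `e` with `x = e a e`
then gives `x = e x = 0`. Finally, since `φ` is graded and `B` is the internal direct sum of the
`B_n`, `φ` kills an element of `A` only if it kills each of its homogeneous components.
-/

open DirectSum

section GradedMap

variable {ι A B : Type*} [DecidableEq ι] [AddCommGroup A] [AddCommGroup B]
  {𝒜 : ι → AddSubgroup A} {ℬ : ι → AddSubgroup B}

theorem DirectSum.IsInternal.map_component_eq_zero (hℬ : IsInternal ℬ)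
    {φ : A →+ B} (hφ : ∀ i, ∀ x ∈ 𝒜 i, φ x ∈ ℬ i) {f : ⨁ i, 𝒜 i}
    (hf : φ (DirectSum.coeAddMonoidHom 𝒜 f) = 0) (i : ι) : φ (f i) = 0 := by
  let ψ : ∀ i, 𝒜 i →+ ℬ i := fun i =>
    (φ.comp (𝒜 i).subtype).codRestrict (ℬ i) fun x => hφ i x x.2
  have hψ : ∀ i x, (ψ i x : B) = φ x := fun _ _ => rfl
  have hcomm : (DirectSum.coeAddMonoidHom ℬ).comp (DirectSum.map ψ) = φ.comp (DirectSum.coeAddMonoidHom 𝒜) :=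
    addHom_ext fun i x => by simp [hψ]
  have hψf : DirectSum.map ψ f = 0 :=
    hℬ.injective (by rw [← AddMonoidHom.comp_apply, hcomm, AddMonoidHom.comp_apply, hf, map_zero])
  simpa [hψ] using congrArg (fun g => (g i : B)) hψf

theorem DirectSum.IsInternal.injective_of_forall_homogeneous (h𝒜 : IsInternal 𝒜)
    (hℬ : IsInternal ℬ) {φ : A →+ B} (hφ : ∀ i, ∀ x ∈ 𝒜 i, φ x ∈ ℬ i)
    (hker : ∀ i, ∀ x ∈ 𝒜 i, φ x = 0 → x = 0) : Function.Injective φ := by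
  rw [injective_iff_map_eq_zero]
  intro a ha
  obtain ⟨f, rfl⟩ := h𝒜.surjective a
  have hf : f = 0 :=
    DirectSum.ext fun i => Subtype.ext (hker i _ (f i).2 (hℬ.map_component_eq_zero hφ ha i))
  rw [hf, map_zero]

end GradedMap

section StronglyGraded

variable {ι A : Type*} [NonUnitalRing A] {𝒜 : ι → AddSubgroup A}

theorem mul_eq_zero_of_mem_subMul {X Y : AddSubgroup A} {x : A} (h : ∀ y ∈ Y, y * x = 0)
    {c : A} (hc : c ∈ subMul X Y) : c * x = 0 := by
  induction hc using AddSubgroup.closure_induction with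
  | mem c hc =>
    obtain ⟨u, -, v, hv, rfl⟩ := hc
    rw [mul_assoc, h v hv, mul_zero]
  | zero => exact zero_mul x
  | add c d _ _ hc hd => rw [add_mul, hc, hd, add_zero]
  | neg c _ hc => rw [neg_mul, hc, neg_zero]

theorem mul_eq_zero_of_map_eq_zero [AddGroup ι] {B : Type*} [NonUnitalRing B]
    (hmul : ∀ m n : ι, ∀ x ∈ 𝒜 m, ∀ y ∈ 𝒜 n, x * y ∈ 𝒜 (m + n))
    (hstrong : ∀ m n : ι, subMul (𝒜 m) (𝒜 n) = 𝒜 (m + n))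
    {φ : A →ₙ+* B} (hinj : Set.InjOn φ (𝒜 0 : Set A))
    {n : ι} {x : A} (hx : x ∈ 𝒜 n) (hφx : φ x = 0) {m : ι} {c : A} (hc : c ∈ 𝒜 m) :
    c * x = 0 := by
  have hvx : ∀ v ∈ 𝒜 (-n), v * x = 0 := by
    intro v hv
    have hmem : v * x ∈ 𝒜 0 := by simpa using hmul (-n) n v hv x hx
    exact hinj hmem (zero_mem _) (by rw [map_mul, hφx, mul_zero, map_zero])
  have hc' : c ∈ subMul (𝒜 (m + n)) (𝒜 (-n)) := by
    rwa [hstrong, add_neg_cancel_right]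
  exact mul_eq_zero_of_mem_subMul hvx hc'

theorem eq_zero_of_forall_homogeneous_mul_eq_zero
    (hglu : ∀ s : Finset A, (∀ x ∈ s, ∃ n : ι, x ∈ 𝒜 n) →
      ∃ e : A, (∃ n : ι, e ∈ 𝒜 n) ∧ e * e = e ∧ ∀ x ∈ s, ∃ a : A, x = e * a * e)
    {n : ι} {x : A} (hx : x ∈ 𝒜 n) (h : ∀ m, ∀ c ∈ 𝒜 m, c * x = 0) : x = 0 := by
  classical
  obtain ⟨e, ⟨k, hek⟩, hee, hxe⟩ := hglu {x} (by simpa using ⟨n, hx⟩)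
  obtain ⟨a, hxa⟩ := hxe x (Finset.mem_singleton_self x)
  have hex : e * x = x := by rw [hxa, ← mul_assoc, ← mul_assoc, hee]
  rw [← hex, h k e hek]

end StronglyGraded

theorem stmt3_general {A B : Type*} [NonUnitalRing A] [NonUnitalRing B]
    (𝒜 : ℤ → AddSubgroup A) (ℬ : ℤ → AddSubgroup B)
    (hAdecomp : DirectSum.IsInternal 𝒜)
    (hAmul : ∀ m n : ℤ, ∀ x ∈ 𝒜 m, ∀ y ∈ 𝒜 n, x * y ∈ 𝒜 (m + n))
    (hBdecomp : DirectSum.IsInternal ℬ)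
    -- `A` is strongly graded
    (hstrong : ∀ m n : ℤ, subMul (𝒜 m) (𝒜 n) = 𝒜 (m + n))
    -- `A` has graded local units
    (hglu : ∀ s : Finset A, (∀ x ∈ s, ∃ n : ℤ, x ∈ 𝒜 n) →
      ∃ e : A, (∃ n : ℤ, e ∈ 𝒜 n) ∧ e * e = e ∧ ∀ x ∈ s, ∃ a : A, x = e * a * e)
    (φ : A →ₙ+* B)
    (hgraded : ∀ n : ℤ, ∀ x ∈ 𝒜 n, φ x ∈ ℬ n)
    (hinj : Set.InjOn φ (𝒜 0 : Set A)) :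
    Function.Injective φ :=
  hAdecomp.injective_of_forall_homogeneous (φ := φ.toAddMonoidHom) hBdecomp hgraded
    fun _ _ hx hφx => eq_zero_of_forall_homogeneous_mul_eq_zero hglu hx
      fun _ _ hc => mul_eq_zero_of_map_eq_zero hAmul hstrong hinj hx hφx hc

/-- Uniqueness theorem for strongly graded rings: if `A = ⊕_{n∈ℤ} A_n` is a
strongly `ℤ`-graded ring with graded local units, `B` is a `ℤ`-graded ring and
`φ : A → B` is a graded ring homomorphism whose restriction to `A_0` is
injective, then `φ` is injective. -/
theorem stmt3 {A B : Type*} [NonUnitalRing A] [NonUnitalRing B]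
    (𝒜 : ℤ → AddSubgroup A) (ℬ : ℤ → AddSubgroup B)
    (hAdecomp : DirectSum.IsInternal 𝒜)
    (hAmul : ∀ m n : ℤ, ∀ x ∈ 𝒜 m, ∀ y ∈ 𝒜 n, x * y ∈ 𝒜 (m + n))
    (hBdecomp : DirectSum.IsInternal ℬ)
    (hBmul : ∀ m n : ℤ, ∀ x ∈ ℬ m, ∀ y ∈ ℬ n, x * y ∈ ℬ (m + n))
    -- `A` is strongly graded
    (hstrong : ∀ m n : ℤ, subMul (𝒜 m) (𝒜 n) = 𝒜 (m + n))
    -- `A` has graded local units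
    (hglu : ∀ s : Finset A, (∀ x ∈ s, ∃ n : ℤ, x ∈ 𝒜 n) →
      ∃ e : A, (∃ n : ℤ, e ∈ 𝒜 n) ∧ e * e = e ∧ ∀ x ∈ s, ∃ a : A, x = e * a * e)
    (φ : A →ₙ+* B)
    (hgraded : ∀ n : ℤ, ∀ x ∈ 𝒜 n, φ x ∈ ℬ n)
    (hinj : Set.InjOn φ (𝒜 0 : Set A)) :
    Function.Injective φ :=
  stmt3_general 𝒜 ℬ hAdecomp hAmul hBdecomp hstrong hglu φ hgraded hinj
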